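/- Let E be an elliptic curve over ℚ whose mod p Galois representation has image containing SL₂(𝔽_p) (in particular non-solvable for p ≥ 5). Then for every solvable Galois extension L/ℚ, the group of p-torsion points E[p](L) is trivial. -/

import Mathlib

/-!
Since `Gal(ℚ̄/ℚ)/Gal(ℚ̄/L)` is solvable, some term of the derived series of the Galois group lies
in `Λ = Gal(ℚ̄/L)`. The image of `ρ` contains the perfect group `SL₂(𝔽_p)`, which therefore lies
in the image of every term of that derived series, hence in `ρ(Λ)`. A vector fixed by all of
`SL₂(𝔽_p)`, in particular by both elementary transvections, is zero.
-/

open Matrix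

theorem Subgroup.exists_derivedSeries_le_of_isSolvable_quotient {Γ : Type*} [Group Γ]
    (Λ : Subgroup Γ) [Λ.Normal] [Group.IsSolvable (Γ ⧸ Λ)] : ∃ n, derivedSeries Γ n ≤ Λ := by
  obtain ⟨n, hn⟩ := Group.IsSolvable.solvable (G := Γ ⧸ Λ)
  rw [← map_derivedSeries_eq (QuotientGroup.mk'_surjective Λ), Subgroup.map_eq_bot_iff,
    QuotientGroup.ker_mk'] at hn
  exact ⟨n, hn⟩

theorem Subgroup.le_map_derivedSeries_of_isPerfect {Γ G : Type*} [Group Γ] [Group G]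
    {ρ : Γ →* G} {H : Subgroup G} [Group.IsPerfect H] (hH : H ≤ ρ.range) (n : ℕ) :
    H ≤ (derivedSeries Γ n).map ρ := by
  induction n with
  | zero => rwa [derivedSeries_zero, ← MonoidHom.range_eq_map]
  | succ n ih =>
    calc H = ⁅H, H⁆ := Subgroup.commutator_eq_self.symm
      _ ≤ ⁅(derivedSeries Γ n).map ρ, (derivedSeries Γ n).map ρ⁆ := Subgroup.commutator_mono ih ih
      _ = (derivedSeries Γ (n + 1)).map ρ := by rw [derivedSeries_succ, Subgroup.map_commutator]

theorem Subgroup.le_map_of_isPerfect_of_isSolvable_quotient {Γ G : Type*} [Group Γ] [Group G]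
    {ρ : Γ →* G} {H : Subgroup G} [Group.IsPerfect H] (hH : H ≤ ρ.range)
    (Λ : Subgroup Γ) [Λ.Normal] [Group.IsSolvable (Γ ⧸ Λ)] : H ≤ Λ.map ρ := by
  obtain ⟨n, hn⟩ := Λ.exists_derivedSeries_le_of_isSolvable_quotient
  exact (le_map_derivedSeries_of_isPerfect hH n).trans (Subgroup.map_mono hn)

theorem Matrix.SpecialLinearGroup.eq_zero_of_forall_smul_eq {ι R : Type*} [Fintype ι]
    [DecidableEq ι] [Nontrivial ι] [CommRing R] {v : ι → R}
    (hv : ∀ g : SpecialLinearGroup ι R, g • v = v) : v = 0 := by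
  ext j
  obtain ⟨i, hij⟩ := exists_ne j
  have := congrFun (hv (transvection hij 1)) i
  simpa [SpecialLinearGroup.smul_def, transvection_coe, add_mulVec, single_mulVec] using this

theorem ZMod.isPerfect_SL2 {p : ℕ} [Fact p.Prime] (hp : 5 ≤ p) :
    Group.IsPerfect (SpecialLinearGroup (Fin 2) (ZMod p)) := by
  have hne (n : ℕ) (hn0 : 0 < n) (hnp : n < p) : (n : ZMod p) ≠ 0 := by
    rw [Ne, ZMod.natCast_eq_zero_iff]
    exact fun hdvd => absurd (Nat.le_of_dvd hn0 hdvd) (by omega)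
  refine ⟨SL2.commutator_eq_top (a := 2) (by exact_mod_cast hne 2 (by norm_num) (by omega)) ?_⟩
  intro h
  apply hne 3 (by norm_num) (by omega)
  push_cast
  linear_combination h

/-- Let `p ≥ 5` be prime and let `ρ : Gal(ℚ̄/ℚ) → GL₂(𝔽_p)` be the mod-`p`
representation of an elliptic curve `E/ℚ`, whose image contains `SL₂(𝔽_p)` (in particular it is
non-solvable).  Then for every solvable Galois extension `L/ℚ` — corresponding to a normal
subgroup `Λ = Gal(ℚ̄/L)` of the absolute Galois group `Γ` with `Γ/Λ` solvable — the group of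
`p`-torsion points `E[p](L)`, i.e. the group of vectors of `𝔽_p²` fixed by `ρ(Λ)`,
is trivial. -/
theorem no_p_torsion_over_solvable_extensions
    (p : ℕ) [Fact p.Prime] (hp5 : 5 ≤ p)
    (Γ : Type) [Group Γ]
    (ρ : Γ →* Matrix.GeneralLinearGroup (Fin 2) (ZMod p))
    (hIm : ∀ g : Matrix.SpecialLinearGroup (Fin 2) (ZMod p),
      ∃ γ : Γ, ρ γ = Matrix.SpecialLinearGroup.toGL g)
    (Λ : Subgroup Γ) [Λ.Normal] (hsolv : IsSolvable (Γ ⧸ Λ)) :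
    ∀ v : Fin 2 → ZMod p,
      (∀ lam ∈ Λ, ((ρ lam : Matrix (Fin 2) (Fin 2) (ZMod p))).mulVec v = v) →
      v = 0 := by
  intro v hv
  have := ZMod.isPerfect_SL2 hp5
  have := Group.IsPerfect.range (SpecialLinearGroup.toGL (n := Fin 2) (R := ZMod p))
  have hSL_le_range : SpecialLinearGroup.toGL.range ≤ ρ.range := by
    rintro _ ⟨g, rfl⟩
    exact hIm g
  have : Group.IsSolvable (Γ ⧸ Λ) := hsolv
  have hSL_le_Λ := Subgroup.le_map_of_isPerfect_of_isSolvable_quotient hSL_le_range Λ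
  refine SpecialLinearGroup.eq_zero_of_forall_smul_eq fun g => ?_
  obtain ⟨lam, hlam, hρ⟩ := hSL_le_Λ ⟨g, rfl⟩
  conv_rhs => rw [← hv lam hlam, hρ]
  rfl
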